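/- Let T>0, θ∈(0,1), C>0, and let P be a polynomial with nonnegative coefficients and P(0)=0. Suppose φ:[0,T]→ℝ₊ is bounded measurable and satisfies 0 ≤ φ(t) ≤ φ(0) + P(t) + (C/Γ(θ)) ∫₀ᵗ (t−s)^{θ−1} φ(s) ds for all t∈[0,T]. Then there exists a constant C_T depending only on T, θ, C such that φ(t) ≤ C_T φ(0) + C_T P(t) for all t∈[0,T]. -/

import Mathlib

/-!
Weight `φ` by `exp (-ρ s)`, where `ρ ^ θ = 2 C`. Comparing with the Gamma integral,
`∫₀ˢ (s - r) ^ (θ - 1) exp (ρ r) dr ≤ Γ(θ) ρ ^ (-θ) exp (ρ s)`, so the integral term at `s` is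
at most `exp (ρ s) N / 2`, with `N` the supremum of the weighted `φ` on `[0, t]`. As `φ 0 + P`
is nondecreasing, `N ≤ φ 0 + P t + N / 2`, whence `φ t ≤ exp (ρ t) N ≤ 2 exp (ρ T) (φ 0 + P t)`.
-/

open MeasureTheory Set Real

theorem Polynomial.monotoneOn_eval_of_coeff_nonneg {R : Type*} [Semiring R] [PartialOrder R]
    [IsOrderedRing R] {p : Polynomial R} (hp : ∀ k, 0 ≤ p.coeff k) :
    MonotoneOn p.eval (Ici 0) := fun x hx y _ hxy => by
  dsimp only
  rw [eval_eq_sum_range, eval_eq_sum_range]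
  exact Finset.sum_le_sum fun i _ =>
    mul_le_mul_of_nonneg_left (pow_le_pow_left₀ hx hxy i) (hp i)

theorem intervalIntegrable_rpow_sub_mul_exp {θ ρ t : ℝ} (hθ : 0 < θ) :
    IntervalIntegrable (fun s => (t - s) ^ (θ - 1) * exp (ρ * s)) volume 0 t := by
  have hker : IntervalIntegrable (fun s => (t - s) ^ (θ - 1)) volume 0 t := by
    simpa using ((intervalIntegral.intervalIntegrable_rpow' (a := 0) (b := t)
      (by linarith : -1 < θ - 1)).comp_sub_left t).symm
  exact hker.mul_continuousOn (by fun_prop)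

theorem integral_rpow_sub_mul_exp_le {θ ρ t : ℝ} (hθ : 0 < θ) (hρ : 0 < ρ) (ht : 0 ≤ t) :
    ∫ s in 0..t, (t - s) ^ (θ - 1) * exp (ρ * s) ≤ Gamma θ / ρ ^ θ * exp (ρ * t) := by
  have hint : IntegrableOn (fun u : ℝ => u ^ (θ - 1) * exp (-(ρ * u))) (Ioi 0) := by
    simpa [rpow_one] using integrableOn_rpow_mul_exp_neg_mul_rpow (by linarith) one_pos hρ
  calc ∫ s in 0..t, (t - s) ^ (θ - 1) * exp (ρ * s)
      = ∫ s in 0..t, exp (ρ * t) * ((t - s) ^ (θ - 1) * exp (-(ρ * (t - s)))) := by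
        refine intervalIntegral.integral_congr fun s _ => ?_
        rw [mul_left_comm, ← exp_add]
        ring_nf
    _ = exp (ρ * t) * ∫ u in 0..t, u ^ (θ - 1) * exp (-(ρ * u)) := by
        rw [intervalIntegral.integral_const_mul,
          intervalIntegral.integral_comp_sub_left (fun u => u ^ (θ - 1) * exp (-(ρ * u))),
          sub_self, sub_zero]
    _ ≤ exp (ρ * t) * ∫ u in Ioi 0, u ^ (θ - 1) * exp (-(ρ * u)) := by
        rw [intervalIntegral.integral_of_le ht]
        refine mul_le_mul_of_nonneg_left (setIntegral_mono_set hint ?_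
          Ioc_subset_Ioi_self.eventuallyLE) (exp_pos _).le
        exact (ae_restrict_iff' measurableSet_Ioi).2 (ae_of_all _ fun u hu =>
          mul_nonneg (rpow_nonneg (le_of_lt hu) _) (exp_pos _).le)
    _ = Gamma θ / ρ ^ θ * exp (ρ * t) := by
        rw [integral_rpow_mul_exp_neg_mul_Ioi hθ hρ, div_rpow zero_le_one hρ.le, one_rpow]
        ring

theorem integral_rpow_sub_mul_le_of_le_exp_mul {φ : ℝ → ℝ} {θ ρ t N : ℝ} (hθ : 0 < θ)
    (ht : 0 ≤ t) (hφ0 : ∀ s ∈ Icc 0 t, 0 ≤ φ s) (hφN : ∀ s ∈ Icc 0 t, φ s ≤ exp (ρ * s) * N) :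
    ∫ s in 0..t, (t - s) ^ (θ - 1) * φ s ≤
      N * ∫ s in 0..t, (t - s) ^ (θ - 1) * exp (ρ * s) := by
  rw [← intervalIntegral.integral_const_mul, intervalIntegral.integral_of_le ht,
    intervalIntegral.integral_of_le ht]
  refine integral_mono_of_nonneg ?_
    (((intervalIntegrable_rpow_sub_mul_exp hθ).const_mul N).def'.mono_set
      (by rw [uIoc_of_le ht]))
    ((ae_restrict_iff' measurableSet_Ioc).2 (ae_of_all _ fun s hs => ?_))
  · refine (ae_restrict_iff' measurableSet_Ioc).2 (ae_of_all _ fun s hs => ?_)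
    exact mul_nonneg (rpow_nonneg (by linarith [hs.2]) _) (hφ0 s (Ioc_subset_Icc_self hs))
  · calc (t - s) ^ (θ - 1) * φ s ≤ (t - s) ^ (θ - 1) * (exp (ρ * s) * N) :=
          mul_le_mul_of_nonneg_left (hφN s (Ioc_subset_Icc_self hs))
            (rpow_nonneg (by linarith [hs.2]) _)
      _ = N * ((t - s) ^ (θ - 1) * exp (ρ * s)) := by ring

theorem fractional_integral_le_of_le_exp_mul {φ : ℝ → ℝ} {θ C ρ s N : ℝ} (hθ : 0 < θ)
    (hρ : 0 < ρ) (hρθ : ρ ^ θ = 2 * C) (hs : 0 ≤ s) (hφ0 : ∀ r ∈ Icc 0 s, 0 ≤ φ r)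
    (hφN : ∀ r ∈ Icc 0 s, φ r ≤ exp (ρ * r) * N) :
    C / Gamma θ * ∫ r in 0..s, (s - r) ^ (θ - 1) * φ r ≤ N / 2 * exp (ρ * s) := by
  have h0s : (0 : ℝ) ∈ Icc 0 s := ⟨le_rfl, hs⟩
  have hN0 : 0 ≤ N := by simpa using (hφ0 0 h0s).trans (hφN 0 h0s)
  have hC : 0 < C := by linarith [rpow_pos_of_pos hρ θ]
  calc C / Gamma θ * ∫ r in 0..s, (s - r) ^ (θ - 1) * φ r
      ≤ C / Gamma θ * (N * (Gamma θ / ρ ^ θ * exp (ρ * s))) := by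
        gcongr
        exact (integral_rpow_sub_mul_le_of_le_exp_mul hθ hs hφ0 hφN).trans
          (mul_le_mul_of_nonneg_left (integral_rpow_sub_mul_exp_le hθ hρ hs) hN0)
    _ = N / 2 * exp (ρ * s) := by
        rw [hρθ]; field_simp [(Gamma_pos_of_pos hθ).ne', hC.ne']

theorem le_two_mul_exp_mul_of_le_add_fractional_integral {φ F : ℝ → ℝ} {θ C t : ℝ}
    (hθ : 0 < θ) (hC : 0 < C) (ht : 0 ≤ t) (hφ0 : ∀ s ∈ Icc 0 t, 0 ≤ φ s)
    (hφM : BddAbove (φ '' Icc 0 t)) (hF : MonotoneOn F (Icc 0 t)) (hF0 : 0 ≤ F 0)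
    (h : ∀ s ∈ Icc 0 t, φ s ≤ F s + C / Gamma θ * ∫ r in 0..s, (s - r) ^ (θ - 1) * φ r) :
    φ t ≤ 2 * exp ((2 * C) ^ θ⁻¹ * t) * F t := by
  set ρ := (2 * C) ^ θ⁻¹
  have hρ : 0 < ρ := by positivity
  have hρθ : ρ ^ θ = 2 * C := rpow_inv_rpow (by positivity) hθ.ne'
  have hweight : ∀ s ∈ Icc 0 t, exp (-(ρ * s)) ≤ 1 := fun s hs =>
    exp_le_one_iff.2 (neg_nonpos.2 (mul_nonneg hρ.le hs.1))
  have hbdd : BddAbove ((fun s => exp (-(ρ * s)) * φ s) '' Icc 0 t) := by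
    obtain ⟨M, hM⟩ := hφM
    refine ⟨M, forall_mem_image.2 fun s hs => le_trans ?_ (hM (mem_image_of_mem φ hs))⟩
    exact mul_le_of_le_one_left (hφ0 s hs) (hweight s hs)
  set N := sSup ((fun s => exp (-(ρ * s)) * φ s) '' Icc 0 t)
  have hle_N : ∀ s ∈ Icc 0 t, exp (-(ρ * s)) * φ s ≤ N :=
    fun s hs => le_csSup hbdd (mem_image_of_mem _ hs)
  have hφN : ∀ s ∈ Icc 0 t, φ s ≤ exp (ρ * s) * N := fun s hs => by
    have := mul_le_mul_of_nonneg_left (hle_N s hs) (exp_pos (ρ * s)).le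
    rwa [← mul_assoc, ← exp_add, add_neg_cancel, exp_zero, one_mul] at this
  have h0t : (0 : ℝ) ∈ Icc 0 t := ⟨le_rfl, ht⟩
  have hstep : ∀ s ∈ Icc 0 t, exp (-(ρ * s)) * φ s ≤ F t + N / 2 := fun s hs => by
    have hsub : Icc 0 s ⊆ Icc 0 t := Icc_subset_Icc_right hs.2
    have hφs : φ s ≤ F s + N / 2 * exp (ρ * s) :=
      (h s hs).trans (add_le_add le_rfl (fractional_integral_le_of_le_exp_mul hθ hρ hρθ hs.1
        (fun r hr => hφ0 r (hsub hr)) (fun r hr => hφN r (hsub hr))))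
    have hFs : 0 ≤ F s := hF0.trans (hF h0t hs hs.1)
    calc exp (-(ρ * s)) * φ s ≤ exp (-(ρ * s)) * (F s + N / 2 * exp (ρ * s)) := by gcongr
      _ = exp (-(ρ * s)) * F s + N / 2 := by
        rw [mul_add, mul_left_comm, ← exp_add, neg_add_cancel, exp_zero, mul_one]
      _ ≤ F t + N / 2 := by
        gcongr
        exact (mul_le_of_le_one_left hFs (hweight s hs)).trans (hF hs ⟨ht, le_rfl⟩ hs.2)
  have hN : N ≤ 2 * F t := by
    have := csSup_le ⟨_, mem_image_of_mem _ h0t⟩ (forall_mem_image.2 hstep)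
    linarith
  calc φ t ≤ exp (ρ * t) * N := hφN t ⟨ht, le_rfl⟩
    _ ≤ exp (ρ * t) * (2 * F t) := by gcongr
    _ = 2 * exp (ρ * t) * F t := by ring

theorem modified_fractional_gronwall_general
    (T θ C : ℝ) (hθ : θ ∈ Set.Ioo (0:ℝ) 1) (hC : 0 < C) :
    ∃ CT : ℝ, ∀ (φ : ℝ → ℝ) (P : Polynomial ℝ),
      (∀ k, 0 ≤ P.coeff k) → P.coeff 0 = 0 →
      Measurable φ →
      (∀ t ∈ Set.Icc (0:ℝ) T, 0 ≤ φ t) →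
      (∃ M : ℝ, ∀ t ∈ Set.Icc (0:ℝ) T, φ t ≤ M) →
      (∀ t ∈ Set.Icc (0:ℝ) T,
        φ t ≤ φ 0 + P.eval t + (C / Real.Gamma θ) * ∫ s in (0:ℝ)..t, (t - s) ^ (θ - 1) * φ s) →
      ∀ t ∈ Set.Icc (0:ℝ) T, φ t ≤ CT * φ 0 + CT * P.eval t := by
  refine ⟨2 * exp ((2 * C) ^ θ⁻¹ * T),
    fun φ P hP _ _ hφ0 ⟨M, hM⟩ hineq t ht => ?_⟩
  have hsub : Icc 0 t ⊆ Icc 0 T := Icc_subset_Icc_right ht.2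
  have hPmono := Polynomial.monotoneOn_eval_of_coeff_nonneg hP
  have hF0 : 0 ≤ φ 0 + P.eval 0 :=
    add_nonneg (hφ0 0 ⟨le_rfl, ht.1.trans ht.2⟩) (P.coeff_zero_eq_eval_zero ▸ hP 0)
  have hφt := le_two_mul_exp_mul_of_le_add_fractional_integral (F := fun s => φ 0 + P.eval s)
    hθ.1 hC ht.1 (fun s hs => hφ0 s (hsub hs))
    ⟨M, forall_mem_image.2 fun s hs => hM s (hsub hs)⟩
    (fun x hx y hy hxy => add_le_add le_rfl (hPmono hx.1 hy.1 hxy)) hF0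
    (fun s hs => hineq s (hsub hs))
  have hFt : 0 ≤ φ 0 + P.eval t := hF0.trans (add_le_add le_rfl (hPmono self_mem_Ici ht.1 ht.1))
  calc φ t ≤ 2 * exp ((2 * C) ^ θ⁻¹ * t) * (φ 0 + P.eval t) := hφt
    _ ≤ 2 * exp ((2 * C) ^ θ⁻¹ * T) * (φ 0 + P.eval t) := by gcongr; exact ht.2
    _ = _ := by ring

/-- Modified fractional Gronwall lemma. -/
theorem modified_fractional_gronwall
    (T θ C : ℝ) (hT : 0 < T) (hθ : θ ∈ Set.Ioo (0:ℝ) 1) (hC : 0 < C) :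
    ∃ CT : ℝ, ∀ (φ : ℝ → ℝ) (P : Polynomial ℝ),
      (∀ k, 0 ≤ P.coeff k) → P.coeff 0 = 0 →
      Measurable φ →
      (∀ t ∈ Set.Icc (0:ℝ) T, 0 ≤ φ t) →
      (∃ M : ℝ, ∀ t ∈ Set.Icc (0:ℝ) T, φ t ≤ M) →
      (∀ t ∈ Set.Icc (0:ℝ) T,
        φ t ≤ φ 0 + P.eval t + (C / Real.Gamma θ) * ∫ s in (0:ℝ)..t, (t - s) ^ (θ - 1) * φ s) →
      ∀ t ∈ Set.Icc (0:ℝ) T, φ t ≤ CT * φ 0 + CT * P.eval t :=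
  modified_fractional_gronwall_general T θ C hθ hC
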